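/- Let $L \in (0,1)$ and let $X, X' \in \mathbb{R}^{n\times d}$ differ in one row. For $v, w \in [0,1]^n$ let $S_v = X^\top\mathrm{diag}(v)X$ and $S_w = (X')^\top\mathrm{diag}(w)X'$, and suppose $x_i^\top S_v^{-1}x_i \le L$ for all $i \in \mathrm{supp}(v)$ and $x'_j{}^\top S_w^{-1}x'_j \le L$ for all $j \in \mathrm{supp}(w)$. If $(1 + \|v - w\|_1)L \le 1/2$, then $S_v$ and $S_w$ are positive definite and $d_{\mathrm{PD}}(S_v, S_w) \le 2(2 + \|v-w\|_1)L$. -/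

import Mathlib

open Matrix
open scoped Classical

/-- Square root of a positive semidefinite matrix (junk value `0` otherwise). -/
noncomputable def msqrt {d : ℕ} (S : Matrix (Fin d) (Fin d) ℝ) :
    Matrix (Fin d) (Fin d) ℝ :=
  if h : S.PosSemidef then
    (h.1.eigenvectorUnitary : Matrix (Fin d) (Fin d) ℝ) *
      diagonal ((↑) ∘ Real.sqrt ∘ h.1.eigenvalues) *
      (star h.1.eigenvectorUnitary : Matrix (Fin d) (Fin d) ℝ)
  else 0

/-- The trace (nuclear) norm of a real matrix: `tr √(Mᵀ M)`. -/
noncomputable def traceNorm {d : ℕ} (M : Matrix (Fin d) (Fin d) ℝ) : ℝ :=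
  (msqrt (Mᵀ * M)).trace

/-- `d_PD(S₁,S₂) = max { ‖S₁^{-1/2} S₂ S₁^{-1/2} − I‖_tr , ‖S₂^{-1/2} S₁ S₂^{-1/2} − I‖_tr }`. -/
noncomputable def dPD {d : ℕ} (S₁ S₂ : Matrix (Fin d) (Fin d) ℝ) : ℝ :=
  max (traceNorm ((msqrt S₁)⁻¹ * S₂ * (msqrt S₁)⁻¹ - 1))
      (traceNorm ((msqrt S₂)⁻¹ * S₁ * (msqrt S₂)⁻¹ - 1))

/-!
Write `S₂ - S₁ = P - N` with `P = X'ᵀ diag(p) X'` and `N = Xᵀ diag(q) X`, where `p` and `q` are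
the weights gained and lost in passing from `(X, v)` to `(X', w)`, the differing row counting as
wholly lost and wholly gained. Then `S₁^{-1/2} S₂ S₁^{-1/2} - I = S₁^{-1/2} (P - N) S₁^{-1/2}` is a
difference of positive semidefinite matrices, so its trace norm is at most
`tr (P S₁⁻¹) + tr (N S₁⁻¹)`. The rows of `N` have leverage at most `L` with respect to `S₁`. The
rows of `P` have leverage at most `L` with respect to `S₂`, so `P ≤ (∑ p) L S₂ ≤ S₂ / 2`, hence
`S₂ ≤ 2 S₁`, and their leverage with respect to `S₁` is at most `2 L`. Altogether the trace norm
is at most `(2 ∑ p + ∑ q) L ≤ (3 + 2 ‖v - w‖₁) L`; the same holds with the roles exchanged.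
-/

open scoped MatrixOrder

namespace Matrix

variable {m : Type*} [Fintype m]

lemma PosSemidef.trace_mul_nonneg {A B : Matrix m m ℝ} (hA : A.PosSemidef) (hB : B.PosSemidef) :
    0 ≤ (A * B).trace := by
  obtain ⟨C, rfl⟩ := CStarAlgebra.nonneg_iff_eq_star_mul_self.mp hB.nonneg
  rw [← mul_assoc, trace_mul_comm, ← mul_assoc, star_eq_conjTranspose]
  exact (hA.mul_mul_conjTranspose_same C).trace_nonneg

lemma IsHermitian.dotProduct_mulVec_comm {S : Matrix m m ℝ} (hS : S.IsHermitian) (a b : m → ℝ) :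
    a ⬝ᵥ S *ᵥ b = b ⬝ᵥ S *ᵥ a := by
  rw [dotProduct_mulVec, ← mulVec_transpose, ← conjTranspose_eq_transpose_of_trivial, hS.eq,
    dotProduct_comm]

lemma PosSemidef.sq_dotProduct_mulVec_le {S : Matrix m m ℝ} (hS : S.PosSemidef) (u y : m → ℝ) :
    (u ⬝ᵥ S *ᵥ y) ^ 2 ≤ (u ⬝ᵥ S *ᵥ u) * (y ⬝ᵥ S *ᵥ y) := by
  obtain ⟨C, rfl⟩ := CStarAlgebra.nonneg_iff_eq_star_mul_self.mp hS.nonneg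
  have hC : ∀ a b : m → ℝ, a ⬝ᵥ (star C * C) *ᵥ b = (C *ᵥ a) ⬝ᵥ (C *ᵥ b) := fun a b => by
    rw [← mulVec_mulVec, dotProduct_mulVec, star_eq_conjTranspose,
      conjTranspose_eq_transpose_of_trivial, vecMul_transpose, dotProduct_comm]
  rw [hC, hC, hC]
  simpa only [dotProduct, sq] using Finset.sum_mul_sq_le_sq_mul_sq _ (C *ᵥ u) (C *ᵥ y)

variable [DecidableEq m]

/-- With `σ = sign (A - B)`, which satisfies `-1 ≤ σ ≤ 1`,
`tr |A - B| = tr (σ A) - tr (σ B) ≤ tr A + tr B`. -/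
lemma PosSemidef.trace_abs_sub_le {A B : Matrix m m ℝ} (hA : A.PosSemidef) (hB : B.PosSemidef) :
    (CFC.abs (A - B)).trace ≤ A.trace + B.trace := by
  have hfin := Set.toFinite (spectrum ℝ (A - B))
  set σ := cfc (fun x : ℝ => (SignType.sign x : ℝ)) (A - B)
  have hsign : ∀ x : ℝ, -1 ≤ (SignType.sign x : ℝ) ∧ (SignType.sign x : ℝ) ≤ 1 := by
    intro x
    rcases lt_trichotomy x 0 with hx | rfl | hx <;> simp [*]
  have habs : CFC.abs (A - B) = σ * (A - B) := by
    rw [CFC.abs_eq_cfc_norm (A - B), ← cfc_id' ℝ (A - B), ← cfc_mul _ _ _ (hfin.continuousOn _),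
      cfc_id' ℝ (A - B)]
    exact cfc_congr fun x _ => by simp [sign_mul_self]
  have hσ_le : (1 - σ).PosSemidef := by
    rw [← cfc_one ℝ (A - B), ← cfc_sub _ _ _ (hfin.continuousOn _) (hfin.continuousOn _)]
    exact (cfc_nonneg fun x _ => by dsimp; linarith [hsign x]).posSemidef
  have hσ_ge : (1 + σ).PosSemidef := by
    rw [← cfc_one ℝ (A - B), ← cfc_add _ _ _ (hfin.continuousOn _) (hfin.continuousOn _)]
    exact (cfc_nonneg fun x _ => by dsimp; linarith [hsign x]).posSemidef
  have hA' := hσ_le.trace_mul_nonneg hA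
  have hB' := hσ_ge.trace_mul_nonneg hB
  rw [sub_mul, one_mul, trace_sub] at hA'
  rw [add_mul, one_mul, trace_add] at hB'
  rw [habs, mul_sub, trace_sub]
  linarith

lemma PosDef.sq_dotProduct_le {S : Matrix m m ℝ} (hS : S.PosDef) (x u : m → ℝ) :
    (x ⬝ᵥ u) ^ 2 ≤ (x ⬝ᵥ S⁻¹ *ᵥ x) * (u ⬝ᵥ S *ᵥ u) := by
  set y := S⁻¹ *ᵥ x
  have hSy : S *ᵥ y = x := by
    rw [mulVec_mulVec, mul_nonsing_inv S ((isUnit_iff_isUnit_det S).mp hS.isUnit), one_mulVec]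
  have h := hS.posSemidef.sq_dotProduct_mulVec_le y u
  rwa [hS.isHermitian.dotProduct_mulVec_comm y u, hSy, dotProduct_comm u,
    dotProduct_comm y] at h

lemma PosDef.dotProduct_inv_mulVec_le_of_forall_le {S₁ S₂ : Matrix m m ℝ} (h₁ : S₁.PosDef)
    (h₂ : S₂.PosDef) {c : ℝ} (hc : 0 ≤ c) (h : ∀ u, u ⬝ᵥ S₂ *ᵥ u ≤ c * (u ⬝ᵥ S₁ *ᵥ u))
    (x : m → ℝ) : x ⬝ᵥ S₁⁻¹ *ᵥ x ≤ c * (x ⬝ᵥ S₂⁻¹ *ᵥ x) := by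
  set u := S₁⁻¹ *ᵥ x
  have hS₁u : S₁ *ᵥ u = x := by
    rw [mulVec_mulVec, mul_nonsing_inv S₁ ((isUnit_iff_isUnit_det S₁).mp h₁.isUnit), one_mulVec]
  have hu : u ⬝ᵥ S₁ *ᵥ u = x ⬝ᵥ u := by rw [hS₁u, dotProduct_comm]
  have hx₁ : 0 ≤ x ⬝ᵥ u := h₁.inv.posSemidef.dotProduct_mulVec_nonneg x
  have hx₂ : 0 ≤ x ⬝ᵥ S₂⁻¹ *ᵥ x := h₂.inv.posSemidef.dotProduct_mulVec_nonneg x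
  have hcs := h₂.sq_dotProduct_le x u
  have hcmp := h u
  rw [hu] at hcmp
  nlinarith [mul_le_mul_of_nonneg_left hcmp hx₂, mul_nonneg hc hx₂]

end Matrix

lemma msqrt_eq_sqrt {d : ℕ} {S : Matrix (Fin d) (Fin d) ℝ} (hS : S.PosSemidef) :
    msqrt S = CFC.sqrt S := by
  rw [msqrt, dif_pos hS, CFC.sqrt_eq_cfc, cfc_nnreal_eq_real _ S hS.nonneg, hS.1.cfc_eq,
    IsHermitian.cfc, Unitary.conjStarAlgAut_apply]
  congr 3
  funext i
  simp [hS.eigenvalues_nonneg i]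

lemma traceNorm_eq_trace_abs {d : ℕ} (M : Matrix (Fin d) (Fin d) ℝ) :
    traceNorm M = (CFC.abs M).trace := by
  have hM : (Mᵀ * M).PosSemidef := by simpa using posSemidef_conjTranspose_mul_self M
  rw [traceNorm, msqrt_eq_sqrt hM, CFC.abs, star_eq_conjTranspose,
    conjTranspose_eq_transpose_of_trivial]

lemma traceNorm_inv_msqrt_conj_sub_one_le {d : ℕ} {S₁ S₂ P N : Matrix (Fin d) (Fin d) ℝ}
    (h₁ : S₁.PosDef) (hP : P.PosSemidef) (hN : N.PosSemidef) (h : S₂ - S₁ = P - N) :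
    traceNorm ((msqrt S₁)⁻¹ * S₂ * (msqrt S₁)⁻¹ - 1) ≤ (P * S₁⁻¹).trace + (N * S₁⁻¹).trace := by
  rw [msqrt_eq_sqrt h₁.posSemidef]
  set Q := CFC.sqrt S₁
  set R := Q⁻¹
  have hQQ : Q * Q = S₁ := CFC.sqrt_mul_sqrt_self S₁ h₁.posSemidef.nonneg
  have hQ : IsUnit Q.det := (isUnit_iff_isUnit_det Q).mp
    ((CFC.isUnit_sqrt_iff S₁ h₁.posSemidef.nonneg).mpr h₁.isUnit)
  have hR : Rᴴ = R := by
    rw [conjTranspose_nonsing_inv, (CFC.sqrt_nonneg S₁).posSemidef.isHermitian.eq]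
  have hRR : R * R = S₁⁻¹ := by rw [← Matrix.mul_inv_rev, hQQ]
  have hRS₁R : R * S₁ * R = 1 := by
    rw [← hQQ, ← mul_assoc, nonsing_inv_mul Q hQ, one_mul, mul_nonsing_inv Q hQ]
  have hconj : R * S₂ * R - 1 = R * P * R - R * N * R := by
    rw [← hRS₁R, ← sub_mul, ← mul_sub, h, mul_sub, sub_mul]
  have htrace : ∀ T : Matrix (Fin d) (Fin d) ℝ, (R * T * R).trace = (T * S₁⁻¹).trace :=
    fun T => by rw [trace_mul_cycle, hRR, trace_mul_comm]
  have hRPR : (R * P * R).PosSemidef := by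
    simpa only [hR] using hP.mul_mul_conjTranspose_same R
  have hRNR : (R * N * R).PosSemidef := by
    simpa only [hR] using hN.mul_mul_conjTranspose_same R
  rw [hconj, traceNorm_eq_trace_abs, ← htrace, ← htrace]
  exact hRPR.trace_abs_sub_le hRNR

lemma sum_mul_le_sum_mul_of_ne_zero {ι : Type*} [Fintype ι] {a f : ι → ℝ} {c : ℝ}
    (ha : ∀ i, 0 ≤ a i) (hf : ∀ i, a i ≠ 0 → f i ≤ c) : ∑ i, a i * f i ≤ (∑ i, a i) * c := by
  rw [Finset.sum_mul]
  refine Finset.sum_le_sum fun i _ => ?_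
  by_cases hi : a i = 0
  · simp [hi]
  · exact mul_le_mul_of_nonneg_left (hf i hi) (ha i)

section WeightedGram

variable {ι m : Type*} [Fintype ι] [DecidableEq ι]

def weightedGram (X : Matrix ι m ℝ) (a : ι → ℝ) : Matrix m m ℝ := Xᵀ * diagonal a * X

lemma weightedGram_apply (X : Matrix ι m ℝ) (a : ι → ℝ) (j k : m) :
    weightedGram X a j k = ∑ i, a i * (X i j * X i k) := by
  simp only [weightedGram, mul_apply, transpose_apply, diagonal_apply, mul_ite, mul_zero,
    Finset.sum_ite_eq', Finset.mem_univ, if_true]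
  exact Finset.sum_congr rfl fun i _ => by ring

variable [Fintype m]

lemma weightedGram_posSemidef (X : Matrix ι m ℝ) {a : ι → ℝ} (ha : ∀ i, 0 ≤ a i) :
    (weightedGram X a).PosSemidef := by
  rw [weightedGram]
  simpa using (PosSemidef.diagonal (fun i => ha i : 0 ≤ a)).conjTranspose_mul_mul_same X

lemma dotProduct_weightedGram_mulVec (X : Matrix ι m ℝ) (a : ι → ℝ) (u : m → ℝ) :
    u ⬝ᵥ weightedGram X a *ᵥ u = ∑ i, a i * (X i ⬝ᵥ u) ^ 2 := by
  rw [weightedGram, ← mulVec_mulVec, ← mulVec_mulVec, dotProduct_mulVec, vecMul_transpose]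
  simp only [dotProduct, mulVec_diagonal, sq]
  exact Finset.sum_congr rfl fun i _ => by simp only [mulVec, dotProduct]; ring

lemma trace_weightedGram_mul (X : Matrix ι m ℝ) (a : ι → ℝ) (T : Matrix m m ℝ) :
    (weightedGram X a * T).trace = ∑ i, a i * (X i ⬝ᵥ T *ᵥ X i) := by
  simp only [trace, diag_apply, mul_apply, weightedGram_apply, dotProduct, mulVec,
    Finset.sum_mul, Finset.mul_sum]
  rw [Finset.sum_comm]
  simp_rw [Finset.sum_comm (γ := ι)]
  exact Finset.sum_congr rfl fun _ _ => Finset.sum_congr rfl fun _ _ =>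
    Finset.sum_congr rfl fun _ _ => by ring

lemma dotProduct_weightedGram_mulVec_le [DecidableEq m] {S : Matrix m m ℝ} (hS : S.PosDef)
    {X : Matrix ι m ℝ} {a : ι → ℝ} (ha : ∀ i, 0 ≤ a i) {L : ℝ}
    (hX : ∀ i, a i ≠ 0 → X i ⬝ᵥ S⁻¹ *ᵥ X i ≤ L) (u : m → ℝ) :
    u ⬝ᵥ weightedGram X a *ᵥ u ≤ (∑ i, a i) * L * (u ⬝ᵥ S *ᵥ u) := by
  rw [dotProduct_weightedGram_mulVec, mul_assoc]
  exact sum_mul_le_sum_mul_of_ne_zero ha fun i hi => (hS.sq_dotProduct_le (X i) u).trans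
    (mul_le_mul_of_nonneg_right (hX i hi) (hS.posSemidef.dotProduct_mulVec_nonneg u))

end WeightedGram

theorem traceNorm_inv_msqrt_conj_sub_one_le_of_leverage {ι : Type*} [Fintype ι] [DecidableEq ι]
    {d : ℕ} {S₁ S₂ : Matrix (Fin d) (Fin d) ℝ} (h₁ : S₁.PosDef) (h₂ : S₂.PosDef)
    {Y Z : Matrix ι (Fin d) ℝ} {p q : ι → ℝ} (hp : ∀ i, 0 ≤ p i) (hq : ∀ i, 0 ≤ q i)
    (hS : S₂ - S₁ = weightedGram Y p - weightedGram Z q) {L : ℝ}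
    (hY : ∀ i, p i ≠ 0 → Y i ⬝ᵥ S₂⁻¹ *ᵥ Y i ≤ L) (hZ : ∀ i, q i ≠ 0 → Z i ⬝ᵥ S₁⁻¹ *ᵥ Z i ≤ L)
    (hsmall : (∑ i, p i) * L ≤ 1 / 2) :
    traceNorm ((msqrt S₁)⁻¹ * S₂ * (msqrt S₁)⁻¹ - 1) ≤ (2 * ∑ i, p i + ∑ i, q i) * L := by
  have hS₂_le : ∀ u, u ⬝ᵥ S₂ *ᵥ u ≤ 2 * (u ⬝ᵥ S₁ *ᵥ u) := fun u => by
    have hdiff : u ⬝ᵥ S₂ *ᵥ u - u ⬝ᵥ S₁ *ᵥ u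
        = u ⬝ᵥ weightedGram Y p *ᵥ u - u ⬝ᵥ weightedGram Z q *ᵥ u := by
      simpa only [sub_mulVec, dotProduct_sub] using congrArg (fun M => u ⬝ᵥ M *ᵥ u) hS
    have hP := dotProduct_weightedGram_mulVec_le h₂ hp hY u
    have hN : 0 ≤ u ⬝ᵥ weightedGram Z q *ᵥ u :=
      (weightedGram_posSemidef Z hq).dotProduct_mulVec_nonneg u
    have h₂u : 0 ≤ u ⬝ᵥ S₂ *ᵥ u := h₂.posSemidef.dotProduct_mulVec_nonneg u
    nlinarith
  have hY₁ : ∀ i, p i ≠ 0 → Y i ⬝ᵥ S₁⁻¹ *ᵥ Y i ≤ 2 * L := fun i hi => by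
    have := h₁.dotProduct_inv_mulVec_le_of_forall_le h₂ zero_le_two hS₂_le (Y i)
    linarith [hY i hi]
  refine (traceNorm_inv_msqrt_conj_sub_one_le h₁ (weightedGram_posSemidef Y hp)
    (weightedGram_posSemidef Z hq) hS).trans ?_
  rw [trace_weightedGram_mul, trace_weightedGram_mul]
  linarith [sum_mul_le_sum_mul_of_ne_zero hp hY₁, sum_mul_le_sum_mul_of_ne_zero hq hZ]

section AddedWeight

variable {ι : Type*} [DecidableEq ι]

/-- The weight that `w` puts on rows beyond what `v` already carries, where row `i₀`
(the row in which the two datasets differ) counts as entirely new. -/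
def addedWeight (i₀ : ι) (v w : ι → ℝ) (i : ι) : ℝ :=
  if i = i₀ then w i else max (w i - v i) 0

variable {i₀ : ι} {v w : ι → ℝ}

lemma addedWeight_nonneg (hw : ∀ i, 0 ≤ w i) (i : ι) : 0 ≤ addedWeight i₀ v w i := by
  unfold addedWeight
  split_ifs
  exacts [hw i, le_max_right _ _]

lemma ne_zero_of_addedWeight_ne_zero (hv : ∀ i, 0 ≤ v i) {i : ι}
    (h : addedWeight i₀ v w i ≠ 0) : w i ≠ 0 := by
  unfold addedWeight at h
  split_ifs at h
  · exact h
  · have := hv i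
    intro hw
    exact h (max_eq_right (by linarith))

lemma addedWeight_le (hw : ∀ i, w i ≤ 1) (i : ι) :
    addedWeight i₀ v w i ≤ (if i = i₀ then 1 else 0) + |v i - w i| := by
  unfold addedWeight
  split_ifs
  · linarith [hw i, abs_nonneg (v i - w i)]
  · rw [zero_add, abs_sub_comm]
    exact max_le (le_abs_self _) (abs_nonneg _)

lemma two_mul_addedWeight_add_addedWeight_le (hv : ∀ i, v i ≤ 1) (hw : ∀ i, w i ≤ 1) (i : ι) :
    2 * addedWeight i₀ v w i + addedWeight i₀ w v i
      ≤ (if i = i₀ then 3 else 0) + 2 * |v i - w i| := by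
  unfold addedWeight
  split_ifs
  · linarith [hv i, hw i, abs_nonneg (v i - w i)]
  · rcases le_total (v i) (w i) with h | h
    · rw [max_eq_left (by linarith), max_eq_right (by linarith), abs_of_nonpos (by linarith)]
      linarith
    · rw [max_eq_right (by linarith), max_eq_left (by linarith), abs_of_nonneg (by linarith)]
      linarith

variable [Fintype ι]

lemma sum_addedWeight_le (hw : ∀ i, w i ≤ 1) :
    ∑ i, addedWeight i₀ v w i ≤ 1 + ∑ i, |v i - w i| := by
  calc ∑ i, addedWeight i₀ v w i ≤ ∑ i, ((if i = i₀ then 1 else 0) + |v i - w i|) :=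
        Finset.sum_le_sum fun i _ => addedWeight_le hw i
    _ = 1 + ∑ i, |v i - w i| := by simp [Finset.sum_add_distrib]

lemma two_mul_sum_addedWeight_add_sum_addedWeight_le (hv : ∀ i, v i ≤ 1) (hw : ∀ i, w i ≤ 1) :
    2 * ∑ i, addedWeight i₀ v w i + ∑ i, addedWeight i₀ w v i ≤ 3 + 2 * ∑ i, |v i - w i| := by
  calc 2 * ∑ i, addedWeight i₀ v w i + ∑ i, addedWeight i₀ w v i
      = ∑ i, (2 * addedWeight i₀ v w i + addedWeight i₀ w v i) := by
        rw [Finset.mul_sum, Finset.sum_add_distrib]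
    _ ≤ ∑ i, ((if i = i₀ then 3 else 0) + 2 * |v i - w i|) :=
        Finset.sum_le_sum fun i _ => two_mul_addedWeight_add_addedWeight_le hv hw i
    _ = 3 + 2 * ∑ i, |v i - w i| := by simp [Finset.sum_add_distrib, Finset.mul_sum]

lemma weightedGram_sub_weightedGram {m : Type*} {X X' : Matrix ι m ℝ}
    (hadj : ∀ i, i ≠ i₀ → X i = X' i) :
    weightedGram X' w - weightedGram X v
      = weightedGram X' (addedWeight i₀ v w) - weightedGram X (addedWeight i₀ w v) := by
  ext j k
  simp only [Matrix.sub_apply, weightedGram_apply, ← Finset.sum_sub_distrib]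
  refine Finset.sum_congr rfl fun i _ => ?_
  by_cases hi : i = i₀
  · simp [addedWeight, hi]
  · rw [hadj i hi]
    simp only [addedWeight, if_neg hi]
    rcases le_total (v i) (w i) with h | h
    · rw [max_eq_left (by linarith), max_eq_right (by linarith)]; ring
    · rw [max_eq_right (by linarith), max_eq_left (by linarith)]; ring

end AddedWeight

theorem traceNorm_inv_msqrt_conj_sub_one_le_of_adjacent {ι : Type*} [Fintype ι] [DecidableEq ι]
    {d : ℕ} {X X' : Matrix ι (Fin d) ℝ} {i₀ : ι} (hadj : ∀ i, i ≠ i₀ → X i = X' i)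
    {v w : ι → ℝ} (hv : ∀ i, 0 ≤ v i ∧ v i ≤ 1) (hw : ∀ i, 0 ≤ w i ∧ w i ≤ 1)
    (h₁ : (weightedGram X v).PosDef) (h₂ : (weightedGram X' w).PosDef) {L : ℝ} (hL : 0 ≤ L)
    (hlevv : ∀ i, v i ≠ 0 → X i ⬝ᵥ (weightedGram X v)⁻¹ *ᵥ X i ≤ L)
    (hlevw : ∀ i, w i ≠ 0 → X' i ⬝ᵥ (weightedGram X' w)⁻¹ *ᵥ X' i ≤ L)
    (hsmall : (1 + ∑ i, |v i - w i|) * L ≤ 1 / 2) :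
    traceNorm ((msqrt (weightedGram X v))⁻¹ * weightedGram X' w * (msqrt (weightedGram X v))⁻¹
      - 1) ≤ 2 * (2 + ∑ i, |v i - w i|) * L := by
  have hv₀ i := (hv i).1
  have hw₀ i := (hw i).1
  have hp := sum_addedWeight_le (i₀ := i₀) (v := v) fun i => (hw i).2
  have hpq := two_mul_sum_addedWeight_add_sum_addedWeight_le (i₀ := i₀)
    (fun i => (hv i).2) fun i => (hw i).2
  refine (traceNorm_inv_msqrt_conj_sub_one_le_of_leverage h₁ h₂ (addedWeight_nonneg hw₀)
    (addedWeight_nonneg hv₀) (weightedGram_sub_weightedGram hadj)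
    (fun i hi => hlevw i (ne_zero_of_addedWeight_ne_zero hv₀ hi))
    (fun i hi => hlevv i (ne_zero_of_addedWeight_ne_zero hw₀ hi))
    ((mul_le_mul_of_nonneg_right hp hL).trans hsmall)).trans ?_
  nlinarith

theorem dPD_of_bounded_leverage_general {n d : ℕ} (X X' : Matrix (Fin n) (Fin d) ℝ)
    (L : ℝ) (hL0 : 0 < L)
    (hadj : ∃ i₀ : Fin n, ∀ i, i ≠ i₀ → X i = X' i)
    (v w : Fin n → ℝ)
    (hv01 : ∀ i, 0 ≤ v i ∧ v i ≤ 1) (hw01 : ∀ i, 0 ≤ w i ∧ w i ≤ 1)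
    (hinvv : IsUnit (Xᵀ * Matrix.diagonal v * X).det)
    (hinvw : IsUnit (X'ᵀ * Matrix.diagonal w * X').det)
    (hlevv : ∀ i, v i ≠ 0 → X i ⬝ᵥ ((Xᵀ * Matrix.diagonal v * X)⁻¹ *ᵥ X i) ≤ L)
    (hlevw : ∀ i, w i ≠ 0 → X' i ⬝ᵥ ((X'ᵀ * Matrix.diagonal w * X')⁻¹ *ᵥ X' i) ≤ L)
    (hsmall : (1 + ∑ i, |v i - w i|) * L ≤ 1 / 2) :
    (Xᵀ * Matrix.diagonal v * X).PosDef ∧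
    (X'ᵀ * Matrix.diagonal w * X').PosDef ∧
    dPD (Xᵀ * Matrix.diagonal v * X) (X'ᵀ * Matrix.diagonal w * X')
      ≤ 2 * (2 + ∑ i, |v i - w i|) * L := by
  obtain ⟨i₀, hadj⟩ := hadj
  have h₁ : (weightedGram X v).PosDef := (weightedGram_posSemidef X fun i => (hv01 i).1)
    |>.posDef_iff_isUnit.mpr ((isUnit_iff_isUnit_det _).mpr hinvv)
  have h₂ : (weightedGram X' w).PosDef := (weightedGram_posSemidef X' fun i => (hw01 i).1)
    |>.posDef_iff_isUnit.mpr ((isUnit_iff_isUnit_det _).mpr hinvw)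
  have hsymm : ∑ i, |w i - v i| = ∑ i, |v i - w i| :=
    Finset.sum_congr rfl fun i _ => abs_sub_comm _ _
  refine ⟨h₁, h₂, max_le ?_ ?_⟩
  · exact traceNorm_inv_msqrt_conj_sub_one_le_of_adjacent hadj hv01 hw01 h₁ h₂ hL0.le
      hlevv hlevw hsmall
  · have := traceNorm_inv_msqrt_conj_sub_one_le_of_adjacent (fun i hi => (hadj i hi).symm)
      hw01 hv01 h₂ h₁ hL0.le hlevw hlevv (by rwa [hsymm])
    rwa [hsymm] at this

/-- Weighted Gram matrices of adjacent datasets with bounded leverage and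
`ℓ₁`-close weights are positive definite and close in `d_PD`. -/
theorem dPD_of_bounded_leverage {n d : ℕ} (X X' : Matrix (Fin n) (Fin d) ℝ)
    (L : ℝ) (hL0 : 0 < L) (hL1 : L < 1)
    (hadj : ∃ i₀ : Fin n, ∀ i, i ≠ i₀ → X i = X' i)
    (v w : Fin n → ℝ)
    (hv01 : ∀ i, 0 ≤ v i ∧ v i ≤ 1) (hw01 : ∀ i, 0 ≤ w i ∧ w i ≤ 1)
    (hinvv : IsUnit (Xᵀ * Matrix.diagonal v * X).det)
    (hinvw : IsUnit (X'ᵀ * Matrix.diagonal w * X').det)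
    (hlevv : ∀ i, v i ≠ 0 → X i ⬝ᵥ ((Xᵀ * Matrix.diagonal v * X)⁻¹ *ᵥ X i) ≤ L)
    (hlevw : ∀ i, w i ≠ 0 → X' i ⬝ᵥ ((X'ᵀ * Matrix.diagonal w * X')⁻¹ *ᵥ X' i) ≤ L)
    (hsmall : (1 + ∑ i, |v i - w i|) * L ≤ 1 / 2) :
    (Xᵀ * Matrix.diagonal v * X).PosDef ∧
    (X'ᵀ * Matrix.diagonal w * X').PosDef ∧
    dPD (Xᵀ * Matrix.diagonal v * X) (X'ᵀ * Matrix.diagonal w * X')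
      ≤ 2 * (2 + ∑ i, |v i - w i|) * L :=
  dPD_of_bounded_leverage_general X X' L hL0 hadj v w hv01 hw01 hinvv hinvw hlevv hlevw hsmall
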